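/- arXiv:2410.12658 — 3 statements merged into one kernel-verified Lean document; each statement's English description precedes it below -/
import Mathlib

section
/- In the product setting, for any two ω, ω′ ∈ ℝ^d that are strongly generic for the product, one has A^ω = A^{ω′} if and only if π^ω ≡sylv^{m_1,…,m_t} π^{ω′}. -/
open scoped RealInnerProductSpace

/-- The slope `ρ^ω(i,j)` of the edge from vertex `u i` to vertex `u j`,
with respect to the objective direction `c`. -/
noncomputable def rho {n d : ℕ} (u : Fin n → EuclideanSpace ℝ (Fin d))
    (c ω : EuclideanSpace ℝ (Fin d)) (i j : Fin n) : ℝ :=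
  ⟪ω, u j - u i⟫ / ⟪c, u j - u i⟫

/-- `τ^ω(i)`: the maximal slope from vertex `i` to a later vertex
(the supremum of the finite set of slopes `ρ^ω(i,j)` for `i < j`;
it is meaningful for non-maximal `i`, where this set is nonempty). -/
noncomputable def tau {n d : ℕ} (u : Fin n → EuclideanSpace ℝ (Fin d))
    (c ω : EuclideanSpace ℝ (Fin d)) (i : Fin n) : ℝ :=
  sSup {x : ℝ | ∃ j : Fin n, i < j ∧ x = rho u c ω i j}

/-- `ω` is generic: for each non-maximal vertex `i` there is a unique `j > i`
whose slope attains the maximal slope `τ^ω(i)`. -/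
def Generic {n d : ℕ} (u : Fin n → EuclideanSpace ℝ (Fin d))
    (c ω : EuclideanSpace ℝ (Fin d)) : Prop :=
  ∀ i : Fin n, (i : ℕ) + 1 < n →
    ∃! j : Fin n, i < j ∧ rho u c ω i j = tau u c ω i

/-- `A` is the max-slope arborescence `A^ω`: it fixes the maximal vertex, and
sends every other vertex `i` to an improving neighbour attaining `τ^ω(i)`. -/
def IsArbo {n d : ℕ} (u : Fin n → EuclideanSpace ℝ (Fin d))
    (c ω : EuclideanSpace ℝ (Fin d)) (A : Fin n → Fin n) : Prop :=
  (∀ i : Fin n, (i : ℕ) + 1 = n → A i = i) ∧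
  (∀ i : Fin n, (i : ℕ) + 1 < n →
    i < A i ∧ rho u c ω i (A i) = tau u c ω i)

/-- The top vertex `(n_1, …, n_t)` of the product polytope. -/
def topVertex {t : ℕ} (m : Fin t → ℕ) : ∀ s : Fin t, Fin (m s + 1) :=
  fun s => Fin.last (m s)

/-- The maximal slope at a vertex `v` of the product polytope: the supremum of
the slopes to improving neighbours, i.e. of the `ρ^{ω_s}(v_s, j)` for `j > v_s`
(a finite set, nonempty when `v` is not the top vertex). -/
noncomputable def prodTau {t : ℕ} {m d : Fin t → ℕ}
    (u : ∀ s : Fin t, Fin (m s + 1) → EuclideanSpace ℝ (Fin (d s)))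
    (c ω : ∀ s : Fin t, EuclideanSpace ℝ (Fin (d s)))
    (v : ∀ s : Fin t, Fin (m s + 1)) : ℝ :=
  sSup {x : ℝ | ∃ s : Fin t, ∃ j : Fin (m s + 1),
    v s < j ∧ x = rho (u s) (c s) (ω s) (v s) j}

/-- `ω` is generic for the product: at each vertex other than the top vertex,
the maximal slope is attained by a unique improving neighbour (encoded by the
coordinate `s` that moves and its new value `j`). -/
def ProdGeneric {t : ℕ} {m d : Fin t → ℕ}
    (u : ∀ s : Fin t, Fin (m s + 1) → EuclideanSpace ℝ (Fin (d s)))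
    (c ω : ∀ s : Fin t, EuclideanSpace ℝ (Fin (d s))) : Prop :=
  ∀ v : ∀ s : Fin t, Fin (m s + 1), v ≠ topVertex m →
    ∃! p : (s : Fin t) × Fin (m s + 1),
      v p.1 < p.2 ∧ rho (u p.1) (c p.1) (ω p.1) (v p.1) p.2 = prodTau u c ω v

/-- `A` is the max-slope arborescence `A^ω` of the product: it fixes the top
vertex, and sends every other vertex `v` to an improving neighbour (differing
from `v` in a single, increased, coordinate) attaining the maximal slope. -/
def ProdIsArbo {t : ℕ} {m d : Fin t → ℕ}
    (u : ∀ s : Fin t, Fin (m s + 1) → EuclideanSpace ℝ (Fin (d s)))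
    (c ω : ∀ s : Fin t, EuclideanSpace ℝ (Fin (d s)))
    (A : (∀ s : Fin t, Fin (m s + 1)) → ∀ s : Fin t, Fin (m s + 1)) : Prop :=
  A (topVertex m) = topVertex m ∧
  ∀ v : ∀ s : Fin t, Fin (m s + 1), v ≠ topVertex m → ∃ s : Fin t,
    v s < A v s ∧ (∀ r : Fin t, r ≠ s → A v r = v r) ∧
    rho (u s) (c s) (ω s) (v s) (A v s) = prodTau u c ω v

/-- The product slope map `Θ`, sending `ω = (ω_1, …, ω_t)` to the concatenation
of the slope vectors of its factors: its coordinates are indexed by the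
disjoint union `Σ s, [m_s]`, ordered lexicographically (which is the canonical
order-isomorphism with `[m]`, `m = m_1 + ⋯ + m_t`, identifying `(s, i)` with
`M_{s-1} + i`). -/
noncomputable def prodTheta {t : ℕ} {m d : Fin t → ℕ}
    (u : ∀ s : Fin t, Fin (m s + 1) → EuclideanSpace ℝ (Fin (d s)))
    (c : ∀ s : Fin t, EuclideanSpace ℝ (Fin (d s)))
    (ω : ∀ s : Fin t, EuclideanSpace ℝ (Fin (d s))) :
    Lex ((s : Fin t) × Fin (m s)) → ℝ :=
  fun q => tau (u (ofLex q).1) (c (ofLex q).1) (ω (ofLex q).1)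
    (Fin.castSucc (ofLex q).2)

/-- `ω` is strongly generic for the product: it is generic for the product and
the `m = m_1 + ⋯ + m_t` coordinates of `Θ(ω)` are pairwise distinct. -/
def ProdStronglyGeneric {t : ℕ} {m d : Fin t → ℕ}
    (u : ∀ s : Fin t, Fin (m s + 1) → EuclideanSpace ℝ (Fin (d s)))
    (c ω : ∀ s : Fin t, EuclideanSpace ℝ (Fin (d s))) : Prop :=
  ProdGeneric u c ω ∧ Function.Injective (prodTheta u c ω)

/-- One step of the `(m_1, …, m_t)`-sylvester rewriting rule on permutations of
`[m] ≅ Σₗ s, [m_s]` (in one-line notation): the letters at two consecutive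
positions `a ⋖ b` may be exchanged whenever they lie in the same block `s` and
some letter strictly between them in value appears at an earlier position
(`U j V i k W ≡ U j V k i W` for letters `i < j < k` with `i, k` — hence `j` —
in the same block). -/
def SylvRelT {t : ℕ} {m : Fin t → ℕ}
    (π π' : Equiv.Perm (Lex ((s : Fin t) × Fin (m s)))) : Prop :=
  ∃ a b : Lex ((s : Fin t) × Fin (m s)), a ⋖ b ∧ π' = π * Equiv.swap a b ∧
    (ofLex (π a)).1 = (ofLex (π b)).1 ∧
    ∃ e : Lex ((s : Fin t) × Fin (m s)),
      e < a ∧ min (π a) (π b) < π e ∧ π e < max (π a) (π b)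

/-- The `(m_1, …, m_t)`-sylvester congruence: the equivalence relation
generated by the `(m_1, …, m_t)`-sylvester rewriting rule. -/
def SylvT {t : ℕ} {m : Fin t → ℕ} :
    Equiv.Perm (Lex ((s : Fin t) × Fin (m s))) →
      Equiv.Perm (Lex ((s : Fin t) × Fin (m s))) → Prop :=
  Relation.EqvGen SylvRelT

/-!
Write `Θ = Θ(ω)` and read a permutation `π` through its positions `π⁻¹`. The
`(m_1, …, m_t)`-sylvester class of a permutation is determined by two invariants: the relative
order of any two letters from different blocks, and, for each letter `i` of a block, the least
letter `j > i` of the same block placed before `i` (or the end `n_s` of the block if there is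
none), its `nextSmaller`. A sylvester move preserves both, and when two permutations share them, an adjacent
inversion of one relative to the other is always a sylvester move, so an induction on the
number of inversions connects them.

On the geometric side, the slope `ρ(i, k)` is a weighted average of `ρ(i, j)` and `ρ(j, k)` for
`i < j < k`. Hence the steepest edge out of `i` in a factor leads to the first `j > i` with
`τ(j) < τ(i)`, where the top vertex counts as `-∞`, i.e. to `nextSmaller` of `Θ`. At a vertex of
the product, the arborescence moves the coordinate of largest slope along that factor's steepest
edge. So `A^ω` records exactly the two invariants of `Θ(ω)`, which coincide with those of `π^ω`.
-/

section LinearOrder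
variable {α : Type*} [LinearOrder α]

theorem CovBy.swap_lt_swap_iff [DecidableEq α] {a b p q : α} (hab : a ⋖ b)
    (h : ¬(p = a ∧ q = b)) (h' : ¬(p = b ∧ q = a)) :
    Equiv.swap a b p < Equiv.swap a b q ↔ p < q := by
  have hl : ∀ {x}, x ≠ a → x ≠ b → (x < a ↔ x < b) := fun hxa _ =>
    ⟨fun hx => hx.trans hab.lt,
      fun hx => (lt_or_gt_of_ne hxa).resolve_right fun hax => hab.2 hax hx⟩
  have hr : ∀ {x}, x ≠ a → x ≠ b → (a < x ↔ b < x) := fun _ hxb =>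
    ⟨fun hx => (lt_or_gt_of_ne hxb.symm).resolve_right fun hxb' => hab.2 hx hxb',
      fun hx => hab.lt.trans hx⟩
  have := hab.lt
  rw [Equiv.swap_apply_def, Equiv.swap_apply_def]
  split_ifs <;> subst_vars <;> simp_all

theorem CovBy.mul_swap_inv_lt_iff [DecidableEq α] {a b : α} (hab : a ⋖ b) (π : Equiv.Perm α)
    {p q : α} (h : ¬(p = π a ∧ q = π b)) (h' : ¬(p = π b ∧ q = π a)) :
    (π * Equiv.swap a b)⁻¹ p < (π * Equiv.swap a b)⁻¹ q ↔ π⁻¹ p < π⁻¹ q := by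
  simp only [mul_inv_rev, Equiv.swap_inv, Equiv.Perm.mul_apply]
  exact hab.swap_lt_swap_iff (by simpa [Equiv.symm_apply_eq] using h)
    (by simpa [Equiv.symm_apply_eq] using h')

variable [Fintype α]

theorem Equiv.Perm.exists_covBy_lt_of_ne_one {σ : Equiv.Perm α} (hσ : σ ≠ 1) :
    ∃ a b, a ⋖ b ∧ σ b < σ a := by
  let := Fintype.toLocallyFiniteOrder (α := α)
  by_contra! h
  have hmono : StrictMono σ := (strictMono_iff_forall_covBy σ).2 fun a b hab =>
    (h a b hab).lt_of_ne (σ.injective.ne hab.lt.ne)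
  refine hσ (Equiv.ext fun x => ?_)
  exact congrArg (fun e : α ≃o α => e x)
    (Subsingleton.elim (hmono.orderIsoOfSurjective σ σ.surjective) (OrderIso.refl α))

def inversionSet (π π' : Equiv.Perm α) : Finset (α × α) :=
  {p | π⁻¹ p.1 < π⁻¹ p.2 ∧ π'⁻¹ p.2 < π'⁻¹ p.1}

theorem mem_inversionSet {π π' : Equiv.Perm α} {p : α × α} :
    p ∈ inversionSet π π' ↔ π⁻¹ p.1 < π⁻¹ p.2 ∧ π'⁻¹ p.2 < π'⁻¹ p.1 := by
  simp [inversionSet]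

theorem inversionSet_self (π : Equiv.Perm α) : inversionSet π π = ∅ := by
  ext p
  simp only [mem_inversionSet, Finset.notMem_empty, iff_false, not_and]
  exact fun h => lt_asymm h

theorem exists_covBy_mem_inversionSet {π π' : Equiv.Perm α} (h : π ≠ π') :
    ∃ a b, a ⋖ b ∧ (π a, π b) ∈ inversionSet π π' := by
  obtain ⟨a, b, hab, hlt⟩ := Equiv.Perm.exists_covBy_lt_of_ne_one (σ := π'⁻¹ * π)
    fun h1 => h (inv_mul_eq_one.mp h1).symm
  exact ⟨a, b, hab, mem_inversionSet.2 ⟨by simpa using hab.lt, hlt⟩⟩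

theorem inversionSet_mul_swap [DecidableEq α] {π π' : Equiv.Perm α} {a b : α} (hab : a ⋖ b)
    (h : (π a, π b) ∈ inversionSet π π') :
    inversionSet (π * Equiv.swap a b) π' = (inversionSet π π').erase (π a, π b) := by
  ext ⟨p, q⟩
  rw [mem_inversionSet, Finset.mem_erase, mem_inversionSet]
  by_cases hpq : p = π a ∧ q = π b
  · obtain ⟨rfl, rfl⟩ := hpq
    simp [Equiv.Perm.mul_apply, hab.lt.not_gt]
  by_cases hqp : p = π b ∧ q = π a
  · obtain ⟨rfl, rfl⟩ := hqp
    simpa [Equiv.Perm.mul_apply, hab.lt.not_gt] using fun _ => (mem_inversionSet.1 h).2.le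
  rw [hab.mul_swap_inv_lt_iff π hpq hqp]
  simp [hpq]

end LinearOrder

abbrev Letter (t : ℕ) (m : Fin t → ℕ) := Lex ((s : Fin t) × Fin (m s))

section Letter
variable {t : ℕ} {m : Fin t → ℕ}

theorem toLex_mk_lt_toLex_mk_iff {r s : Fin t} {i : Fin (m r)} {j : Fin (m s)} :
    (toLex ⟨r, i⟩ : Letter t m) < toLex ⟨s, j⟩ ↔ r < s ∨ ∃ h : r = s, h ▸ i < j :=
  Sigma.lex_iff

theorem toLex_mk_lt_toLex_mk_iff_lt {s : Fin t} {i j : Fin (m s)} :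
    (toLex ⟨s, i⟩ : Letter t m) < toLex ⟨s, j⟩ ↔ i < j := by
  simp [toLex_mk_lt_toLex_mk_iff]

theorem exists_eq_toLex_mk_of_lt_of_lt {s : Fin t} {i k : Fin (m s)} {z : Letter t m}
    (hiz : toLex ⟨s, i⟩ < z) (hzk : z < toLex ⟨s, k⟩) :
    ∃ j : Fin (m s), z = toLex ⟨s, j⟩ ∧ i < j ∧ j < k := by
  obtain ⟨⟨r, j⟩, rfl⟩ : ∃ p, z = toLex p := ⟨ofLex z, rfl⟩
  rw [toLex_mk_lt_toLex_mk_iff] at hiz hzk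
  obtain hsr | ⟨rfl, hij⟩ := hiz
  · obtain hrs | ⟨rfl, -⟩ := hzk
    · exact absurd (hsr.trans hrs) (lt_irrefl _)
    · exact absurd hsr (lt_irrefl _)
  · obtain hrs | ⟨_, hjk⟩ := hzk
    · exact absurd hrs (lt_irrefl _)
    · exact ⟨j, rfl, hij, hjk⟩

end Letter

section NextSmaller
variable {t : ℕ} {m : Fin t → ℕ} {β γ δ : Type*} [LinearOrder β] [LinearOrder γ] [LinearOrder δ]

/-- `Fin.last (m s)`, the end of the block, always belongs to this set: no letter lies there. -/
def smallerAfter (f : Letter t m → β) (s : Fin t) (i : Fin (m s)) : Finset (Fin (m s + 1)) :=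
  {j | i.castSucc < j ∧ ∀ k : Fin (m s), k.castSucc = j → f (toLex ⟨s, k⟩) < f (toLex ⟨s, i⟩)}

theorem mem_smallerAfter {f : Letter t m → β} {s : Fin t} {i : Fin (m s)} {j : Fin (m s + 1)} :
    j ∈ smallerAfter f s i ↔
      i.castSucc < j ∧ ∀ k : Fin (m s), k.castSucc = j → f (toLex ⟨s, k⟩) < f (toLex ⟨s, i⟩) := by
  simp [smallerAfter]

def nextSmaller (f : Letter t m → β) (s : Fin t) (i : Fin (m s)) : Fin (m s + 1) :=
  (smallerAfter f s i).min' ⟨Fin.last _, mem_smallerAfter.2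
    ⟨Fin.castSucc_lt_last i, fun k hk => absurd hk (Fin.castSucc_ne_last k)⟩⟩

variable {f : Letter t m → β} {g : Letter t m → γ} {s : Fin t} {i k : Fin (m s)}

theorem nextSmaller_spec (f : Letter t m → β) (s : Fin t) (i : Fin (m s)) :
    i.castSucc < nextSmaller f s i ∧ ∀ k : Fin (m s), k.castSucc = nextSmaller f s i →
      f (toLex ⟨s, k⟩) < f (toLex ⟨s, i⟩) :=
  mem_smallerAfter.1 (Finset.min'_mem _ _)

theorem nextSmaller_le_of_mem {j : Fin (m s + 1)} (h : j ∈ smallerAfter f s i) :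
    nextSmaller f s i ≤ j :=
  Finset.min'_le _ _ h

theorem nextSmaller_le (hik : i < k) (hk : f (toLex ⟨s, k⟩) < f (toLex ⟨s, i⟩)) :
    nextSmaller f s i ≤ k.castSucc :=
  nextSmaller_le_of_mem <| mem_smallerAfter.2
    ⟨Fin.castSucc_lt_castSucc_iff.2 hik, fun _ h => Fin.castSucc_injective _ h ▸ hk⟩

theorem le_nextSmaller {j : Fin (m s + 1)}
    (h : ∀ k : Fin (m s), i < k → k.castSucc < j → ¬f (toLex ⟨s, k⟩) < f (toLex ⟨s, i⟩)) :
    j ≤ nextSmaller f s i := by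
  by_contra! hlt
  obtain ⟨hi, hk⟩ := nextSmaller_spec f s i
  set k := (nextSmaller f s i).castPred (hlt.trans_le (Fin.le_last j)).ne
  have hk' : k.castSucc = nextSmaller f s i := Fin.castSucc_castPred _ _
  exact h k (by rwa [← Fin.castSucc_lt_castSucc_iff, hk']) (hk'.symm ▸ hlt) (hk k hk')

theorem nextSmaller_congr
    (h : ∀ k : Fin (m s), i < k → k.castSucc ≤ nextSmaller f s i →
      (f (toLex ⟨s, k⟩) < f (toLex ⟨s, i⟩) ↔ g (toLex ⟨s, k⟩) < g (toLex ⟨s, i⟩))) :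
    nextSmaller f s i = nextSmaller g s i := by
  apply le_antisymm
  · refine le_nextSmaller fun k hik hk hg => ?_
    exact (nextSmaller_le hik ((h k hik hk.le).2 hg)).not_gt hk
  · obtain ⟨hi, hf⟩ := nextSmaller_spec f s i
    refine nextSmaller_le_of_mem (mem_smallerAfter.2 ⟨hi, fun k hk => ?_⟩)
    exact (h k (Fin.castSucc_lt_castSucc_iff.1 (hk ▸ hi)) hk.le).1 (hf k hk)

structure SylvesterEquivalent (f : Letter t m → β) (g : Letter t m → γ) : Prop where
  lt_iff_lt : ∀ q q', (ofLex q).1 ≠ (ofLex q').1 → (f q < f q' ↔ g q < g q')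
  nextSmaller_eq : ∀ s i, nextSmaller f s i = nextSmaller g s i

namespace SylvesterEquivalent

theorem of_lt_iff_lt (h : ∀ q q', f q < f q' ↔ g q < g q') : SylvesterEquivalent f g :=
  ⟨fun q q' _ => h q q', fun _ _ => nextSmaller_congr fun _ _ _ => h _ _⟩

theorem of_strictMono_comp {π : Equiv.Perm (Letter t m)} (h : StrictMono fun q => f (π q)) :
    SylvesterEquivalent f ⇑π⁻¹ :=
  of_lt_iff_lt fun q q' => by simpa using h.lt_iff_lt (a := π⁻¹ q) (b := π⁻¹ q')

protected theorem refl (f : Letter t m → β) : SylvesterEquivalent f f :=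
  of_lt_iff_lt fun _ _ => Iff.rfl

protected theorem symm (h : SylvesterEquivalent f g) : SylvesterEquivalent g f :=
  ⟨fun q q' hq => (h.lt_iff_lt q q' hq).symm, fun s i => (h.nextSmaller_eq s i).symm⟩

protected theorem trans {e : Letter t m → δ} (h : SylvesterEquivalent f g)
    (h' : SylvesterEquivalent g e) : SylvesterEquivalent f e :=
  ⟨fun q q' hq => (h.lt_iff_lt q q' hq).trans (h'.lt_iff_lt q q' hq),
    fun s i => (h.nextSmaller_eq s i).trans (h'.nextSmaller_eq s i)⟩

end SylvesterEquivalent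

end NextSmaller

section Sylvester
variable {t : ℕ} {m : Fin t → ℕ} {π π' : Equiv.Perm (Letter t m)}

theorem SylvRelT.sylvesterEquivalent (h : SylvRelT π π') :
    SylvesterEquivalent ⇑π⁻¹ ⇑π'⁻¹ := by
  obtain ⟨a, b, hab, rfl, hblk, e, hea, hlo, hhi⟩ := h
  -- The swap only changes the comparison of the two swapped letters. The witness `π e`, placed
  -- before both and valued between them, stops `nextSmaller` of the smaller one before the other.
  have key : ∀ (s : Fin t) (i k : Fin (m s)), min (π a) (π b) = toLex ⟨s, i⟩ →
      max (π a) (π b) = toLex ⟨s, k⟩ → nextSmaller ⇑π⁻¹ s i < k.castSucc := by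
    intro s i k hmin hmax
    obtain ⟨j, hj, hij, hjk⟩ := exists_eq_toLex_mk_of_lt_of_lt (hmin ▸ hlo) (hmax ▸ hhi)
    refine (nextSmaller_le hij ?_).trans_lt (Fin.castSucc_lt_castSucc_iff.2 hjk)
    rw [← hj, ← hmin]
    rcases min_choice (π a) (π b) with h | h <;> simp [h, hea, hea.trans hab.lt]
  constructor
  · intro q q' hqq'
    refine (hab.mul_swap_inv_lt_iff π ?_ ?_).symm <;> rintro ⟨rfl, rfl⟩
    exacts [hqq' hblk, hqq' hblk.symm]
  · intro s i
    refine nextSmaller_congr fun k hik hk => (hab.mul_swap_inv_lt_iff π ?_ ?_).symm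
    · rintro ⟨hka, hib⟩
      have hlt : π b < π a := by rw [← hka, ← hib]; exact toLex_mk_lt_toLex_mk_iff_lt.2 hik
      exact (key s i k (by rw [min_eq_right hlt.le, hib])
        (by rw [max_eq_left hlt.le, hka])).not_ge hk
    · rintro ⟨hkb, hia⟩
      have hlt : π a < π b := by rw [← hkb, ← hia]; exact toLex_mk_lt_toLex_mk_iff_lt.2 hik
      exact (key s i k (by rw [min_eq_left hlt.le, hia])
        (by rw [max_eq_right hlt.le, hkb])).not_ge hk

theorem SylvesterEquivalent.exists_between_of_covBy (h : SylvesterEquivalent ⇑π⁻¹ ⇑π'⁻¹)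
    {a b : Letter t m} (hab : a ⋖ b) {s : Fin t} {i j : Fin (m s)}
    (ha : π a = toLex ⟨s, i⟩) (hb : π b = toLex ⟨s, j⟩) (hinv : π'⁻¹ (π b) < π'⁻¹ (π a)) :
    ∃ e < a, min (π a) (π b) < π e ∧ π e < max (π a) (π b) := by
  by_contra! hno
  have ha' : π⁻¹ (toLex ⟨s, i⟩) = a := by rw [← ha]; simp
  have hb' : π⁻¹ (toLex ⟨s, j⟩) = b := by rw [← hb]; simp
  rw [ha, hb] at hno hinv
  rcases lt_trichotomy i j with hij | rfl | hji
  · have hlt : (toLex ⟨s, i⟩ : Letter t m) < toLex ⟨s, j⟩ := toLex_mk_lt_toLex_mk_iff_lt.2 hij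
    rw [min_eq_left hlt.le, max_eq_right hlt.le] at hno
    have h1 : j.castSucc ≤ nextSmaller ⇑π⁻¹ s i := le_nextSmaller fun k hik hkj hk => by
      rw [ha'] at hk
      have := hno _ hk (by simpa using toLex_mk_lt_toLex_mk_iff_lt.2 hik)
      simp only [Equiv.Perm.coe_inv, Equiv.apply_symm_apply] at this
      exact this.not_gt (toLex_mk_lt_toLex_mk_iff_lt.2 (Fin.castSucc_lt_castSucc_iff.1 hkj))
    have h2 : nextSmaller ⇑π⁻¹ s i ≠ j.castSucc := fun hj => by
      have := (nextSmaller_spec _ s i).2 j hj.symm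
      rw [ha', hb'] at this
      exact hab.lt.not_gt this
    have h3 : nextSmaller ⇑π'⁻¹ s i ≤ j.castSucc := nextSmaller_le hij hinv
    rw [← h.nextSmaller_eq] at h3
    exact h2 (le_antisymm h3 h1)
  · exact hab.lt.ne (π.injective (ha.trans hb.symm))
  · have hlt : (toLex ⟨s, j⟩ : Letter t m) < toLex ⟨s, i⟩ := toLex_mk_lt_toLex_mk_iff_lt.2 hji
    rw [min_eq_right hlt.le, max_eq_left hlt.le] at hno
    have h1 : i.castSucc ≤ nextSmaller ⇑π⁻¹ s j := le_nextSmaller fun k hjk hki hk => by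
      rw [hb'] at hk
      have hka : π⁻¹ (toLex ⟨s, k⟩) ≠ a := by rw [← ha']; simpa using hki.ne
      have := hno _ ((hab.le_of_lt hk).lt_of_ne hka)
        (by simpa using toLex_mk_lt_toLex_mk_iff_lt.2 hjk)
      simp only [Equiv.Perm.coe_inv, Equiv.apply_symm_apply] at this
      exact this.not_gt (toLex_mk_lt_toLex_mk_iff_lt.2 (Fin.castSucc_lt_castSucc_iff.1 hki))
    have h2 : nextSmaller ⇑π⁻¹ s j ≤ i.castSucc :=
      nextSmaller_le hji (by rw [ha', hb']; exact hab.lt)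
    have h3 := (nextSmaller_spec ⇑π'⁻¹ s j).2 i
      (by rw [← h.nextSmaller_eq]; exact (le_antisymm h2 h1).symm)
    exact hinv.not_gt h3

theorem SylvesterEquivalent.sylvRelT_mul_swap (h : SylvesterEquivalent ⇑π⁻¹ ⇑π'⁻¹)
    {a b : Letter t m} (hab : a ⋖ b) (hmem : (π a, π b) ∈ inversionSet π π') :
    SylvRelT π (π * Equiv.swap a b) := by
  have hinv := (mem_inversionSet.1 hmem).2
  have hblk : (ofLex (π a)).1 = (ofLex (π b)).1 := by
    by_contra hne
    exact hinv.not_gt ((h.lt_iff_lt _ _ hne).1 (by simpa using hab.lt))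
  obtain ⟨⟨s, i⟩, ha⟩ : ∃ p, π a = toLex p := ⟨_, rfl⟩
  obtain ⟨⟨s', j⟩, hb⟩ : ∃ p, π b = toLex p := ⟨_, rfl⟩
  rw [ha, hb] at hblk
  obtain rfl : s = s' := hblk
  exact ⟨a, b, hab, rfl, by rw [ha, hb]; rfl, h.exists_between_of_covBy hab ha hb hinv⟩

theorem SylvesterEquivalent.sylvT (h : SylvesterEquivalent ⇑π⁻¹ ⇑π'⁻¹) : SylvT π π' := by
  induction hN : (inversionSet π π').card generalizing π with
  | zero =>
    obtain rfl : π = π' := by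
      by_contra hne
      obtain ⟨a, b, -, hmem⟩ := exists_covBy_mem_inversionSet hne
      exact Finset.notMem_empty _ (Finset.card_eq_zero.1 hN ▸ hmem)
    exact .refl _
  | succ N ih =>
    obtain ⟨a, b, hab, hmem⟩ := exists_covBy_mem_inversionSet (π := π) (π' := π') <| by
      rintro rfl
      simp [inversionSet_self] at hN
    have hrel := h.sylvRelT_mul_swap hab hmem
    refine .trans _ _ _ (.rel _ _ hrel) (ih (hrel.sylvesterEquivalent.symm.trans h) ?_)
    rw [inversionSet_mul_swap hab hmem, Finset.card_erase_of_mem hmem, hN, Nat.add_sub_cancel]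

theorem sylvT_iff_sylvesterEquivalent : SylvT π π' ↔ SylvesterEquivalent ⇑π⁻¹ ⇑π'⁻¹ := by
  refine ⟨fun h => ?_, SylvesterEquivalent.sylvT⟩
  induction h with
  | rel _ _ h => exact h.sylvesterEquivalent
  | refl => exact .refl _
  | symm _ _ _ ih => exact ih.symm
  | trans _ _ _ _ _ ih ih' => exact ih.trans ih'

end Sylvester

section Slope
variable {n d : ℕ} {u : Fin n → EuclideanSpace ℝ (Fin d)} {c ω : EuclideanSpace ℝ (Fin d)}
  {i j k l : Fin n}

theorem inner_sub_pos (hc : StrictMono fun i => ⟪c, u i⟫) (hij : i < j) :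
    0 < ⟪c, u j - u i⟫ := by
  rw [inner_sub_right]
  exact sub_pos.2 (hc hij)

theorem rho_mediant (hc : StrictMono fun i => ⟪c, u i⟫) (hij : i < j) (hjk : j < k) :
    rho u c ω i k * (⟪c, u j - u i⟫ + ⟪c, u k - u j⟫) =
      rho u c ω i j * ⟪c, u j - u i⟫ + rho u c ω j k * ⟪c, u k - u j⟫ := by
  have hmul : ∀ {a b : Fin n}, a < b → rho u c ω a b * ⟪c, u b - u a⟫ = ⟪ω, u b - u a⟫ :=
    fun hab => div_mul_cancel₀ _ (inner_sub_pos hc hab).ne'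
  have hsplit : ∀ x : EuclideanSpace ℝ (Fin d),
      ⟪x, u k - u i⟫ = ⟪x, u j - u i⟫ + ⟪x, u k - u j⟫ :=
    fun x => by rw [← inner_add_right, sub_add_sub_cancel']
  rw [← hsplit, hmul (hij.trans hjk), hmul hij, hmul hjk, hsplit]

theorem rho_lt_rho_iff_lt_rho (hc : StrictMono fun i => ⟪c, u i⟫) (hij : i < j) (hjk : j < k) :
    rho u c ω i j < rho u c ω i k ↔ rho u c ω i k < rho u c ω j k := by
  have h₁ := inner_sub_pos hc hij
  have h₂ := inner_sub_pos hc hjk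
  have := rho_mediant (ω := ω) hc hij hjk
  constructor <;> intro h <;> nlinarith

theorem rho_lt_rho_iff_rho_lt (hc : StrictMono fun i => ⟪c, u i⟫) (hij : i < j) (hjk : j < k) :
    rho u c ω i k < rho u c ω i j ↔ rho u c ω j k < rho u c ω i k := by
  have h₁ := inner_sub_pos hc hij
  have h₂ := inner_sub_pos hc hjk
  have := rho_mediant (ω := ω) hc hij hjk
  constructor <;> intro h <;> nlinarith

theorem finite_setOf_rho (i : Fin n) : {x | ∃ j, i < j ∧ x = rho u c ω i j}.Finite :=
  (Set.finite_range fun j => rho u c ω i j).subset (by rintro _ ⟨j, -, rfl⟩; exact ⟨j, rfl⟩)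

theorem rho_le_tau (hij : i < j) : rho u c ω i j ≤ tau u c ω i :=
  le_csSup (finite_setOf_rho i).bddAbove ⟨j, hij, rfl⟩

theorem exists_rho_eq_tau (hij : i < j) : ∃ k, i < k ∧ rho u c ω i k = tau u c ω i := by
  have hne : {x | ∃ j, i < j ∧ x = rho u c ω i j}.Nonempty := ⟨_, j, hij, rfl⟩
  obtain ⟨k, hk, h⟩ := hne.csSup_mem (finite_setOf_rho i)
  exact ⟨k, hk, h.symm⟩

variable (u c ω) in
def IsSteepestEdge (i j : Fin n) : Prop :=
  i < j ∧ ∀ k, i < k → k ≠ j → rho u c ω i k < rho u c ω i j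

namespace IsSteepestEdge

theorem rho_eq_tau (h : IsSteepestEdge u c ω i j) : rho u c ω i j = tau u c ω i := by
  refine (rho_le_tau h.1).antisymm (csSup_le ⟨_, j, h.1, rfl⟩ ?_)
  rintro _ ⟨k, hk, rfl⟩
  rcases eq_or_ne k j with rfl | hkj
  exacts [le_rfl, (h.2 k hk hkj).le]

theorem tau_lt_tau (hc : StrictMono fun i => ⟪c, u i⟫) (h : IsSteepestEdge u c ω i j)
    (hik : i < k) (hkj : k < j) : tau u c ω i < tau u c ω k := by
  have := (rho_lt_rho_iff_lt_rho hc hik hkj).1 (h.2 k hik hkj.ne)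
  exact h.rho_eq_tau ▸ this.trans_le (rho_le_tau hkj)

theorem tau_lt (hc : StrictMono fun i => ⟪c, u i⟫) (h : IsSteepestEdge u c ω i j)
    (hjl : j < l) : tau u c ω j < tau u c ω i := by
  obtain ⟨k, hjk, hk⟩ := exists_rho_eq_tau (u := u) (c := c) (ω := ω) hjl
  have hik := h.2 k (h.1.trans hjk) hjk.ne'
  rw [← hk, ← h.rho_eq_tau]
  exact ((rho_lt_rho_iff_rho_lt hc h.1 hjk).1 hik).trans hik

end IsSteepestEdge

end Slope

section Product
variable {t : ℕ} {m d : Fin t → ℕ}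
  {u : ∀ s : Fin t, Fin (m s + 1) → EuclideanSpace ℝ (Fin (d s))}
  {c ω : ∀ s : Fin t, EuclideanSpace ℝ (Fin (d s))}
  {A : (∀ s : Fin t, Fin (m s + 1)) → ∀ s : Fin t, Fin (m s + 1)}

theorem forall_of_topVertex_eq_castSucc (P : (r : Fin t) → Fin (m r) → Prop) :
    ∀ r k, topVertex m r = k.castSucc → P r k :=
  fun _ k hk => absurd hk.symm (Fin.castSucc_ne_last k)

theorem forall_of_update_eq_castSucc {P : (r : Fin t) → Fin (m r) → Prop}
    {v : ∀ r, Fin (m r + 1)} (hv : ∀ r k, v r = k.castSucc → P r k) {s : Fin t} {i : Fin (m s)}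
    (hi : P s i) : ∀ r k, Function.update v s i.castSucc r = k.castSucc → P r k := by
  intro r k hk
  rcases eq_or_ne r s with rfl | hrs
  · rw [Function.update_self] at hk
    exact Fin.castSucc_injective _ hk ▸ hi
  · exact hv r k (by rwa [Function.update_of_ne hrs] at hk)

theorem prodTau_eq_tau {v : ∀ r, Fin (m r + 1)} {s : Fin t} {i : Fin (m s)}
    (hvs : v s = i.castSucc)
    (hmax : ∀ r k, v r = k.castSucc →
      prodTheta u c ω (toLex ⟨r, k⟩) ≤ prodTheta u c ω (toLex ⟨s, i⟩)) :
    prodTau u c ω v = tau (u s) (c s) (ω s) i.castSucc := by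
  obtain ⟨j, hij, hj⟩ := exists_rho_eq_tau (u := u s) (c := c s) (ω := ω s)
    (Fin.castSucc_lt_last i)
  refine le_antisymm (csSup_le ⟨_, s, j, hvs ▸ hij, rfl⟩ ?_) ?_
  · rintro _ ⟨r, l, hl, rfl⟩
    obtain ⟨k, hk⟩ : ∃ k : Fin (m r), v r = k.castSucc :=
      ⟨_, (Fin.castSucc_castPred _ (hl.trans_le (Fin.le_last l)).ne).symm⟩
    rw [hk] at hl ⊢
    exact (rho_le_tau hl).trans (hmax r k hk)
  · have hfin :
        {x | ∃ r, ∃ l : Fin (m r + 1), v r < l ∧ x = rho (u r) (c r) (ω r) (v r) l}.Finite :=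
      (Set.finite_range fun p : (r : Fin t) × Fin (m r + 1) =>
        rho (u p.1) (c p.1) (ω p.1) (v p.1) p.2).subset
        (by rintro _ ⟨r, l, -, rfl⟩; exact ⟨⟨r, l⟩, rfl⟩)
    exact hj ▸ le_csSup hfin.bddAbove ⟨s, j, hvs ▸ hij, by rw [hvs]⟩

theorem ProdIsArbo.apply_of_max_letter (hω : ProdGeneric u c ω)
    (hA : ProdIsArbo u c ω A) {v : ∀ r, Fin (m r + 1)} {s : Fin t} {i : Fin (m s)}
    (hvs : v s = i.castSucc)
    (hmax : ∀ r k, v r = k.castSucc →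
      prodTheta u c ω (toLex ⟨r, k⟩) ≤ prodTheta u c ω (toLex ⟨s, i⟩)) :
    (∀ r, r ≠ s → A v r = v r) ∧ IsSteepestEdge (u s) (c s) (ω s) i.castSucc (A v s) := by
  have hv : v ≠ topVertex m := fun h =>
    Fin.castSucc_ne_last i (hvs.symm.trans (congrFun h s))
  have htau := prodTau_eq_tau hvs hmax
  obtain ⟨s₀, hlt, hfix, hrho⟩ := hA.2 v hv
  obtain ⟨p, -, hp⟩ := hω v hv
  have hpA : (⟨s₀, A v s₀⟩ : (r : Fin t) × Fin (m r + 1)) = p := hp _ ⟨hlt, hrho⟩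
  obtain ⟨j, hij, hj⟩ := exists_rho_eq_tau (u := u s) (c := c s) (ω := ω s)
    (Fin.castSucc_lt_last i)
  obtain rfl : s₀ = s :=
    congrArg Sigma.fst (hpA.trans (hp ⟨s, j⟩ ⟨hvs ▸ hij, by rw [hvs, hj, htau]⟩).symm)
  rw [hvs] at hlt hrho
  refine ⟨hfix, hlt, fun k hik hk => ?_⟩
  refine ((rho_le_tau hik).lt_of_ne fun heq => hk ?_).trans_eq (hrho.trans htau).symm
  have hpk := hp ⟨s₀, k⟩ ⟨hvs ▸ hik, by rw [hvs, heq, htau]⟩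
  exact eq_of_heq (Sigma.mk.inj_iff.1 (hpk.trans hpA.symm)).2

theorem ProdIsArbo.isSteepestEdge_update (hω : ProdGeneric u c ω) (hA : ProdIsArbo u c ω A)
    (s : Fin t) (i : Fin (m s)) :
    IsSteepestEdge (u s) (c s) (ω s) i.castSucc
      (A (Function.update (topVertex m) s i.castSucc) s) :=
  (hA.apply_of_max_letter hω (Function.update_self _ _ _)
    (forall_of_update_eq_castSucc (forall_of_topVertex_eq_castSucc _) le_rfl)).2

theorem ProdStronglyGeneric.prodTheta_ne (hω : ProdStronglyGeneric u c ω) {r₁ r₂ : Fin t}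
    (h : r₁ ≠ r₂) (k₁ : Fin (m r₁)) (k₂ : Fin (m r₂)) :
    prodTheta u c ω (toLex ⟨r₁, k₁⟩) ≠ prodTheta u c ω (toLex ⟨r₂, k₂⟩) :=
  fun heq => h (congrArg (fun q => (ofLex q).1) (hω.2 heq))

theorem ProdIsArbo.prodTheta_lt_iff (hω : ProdStronglyGeneric u c ω) (hA : ProdIsArbo u c ω A)
    {r₁ r₂ : Fin t} (h : r₁ ≠ r₂) (k₁ : Fin (m r₁)) (k₂ : Fin (m r₂)) :
    prodTheta u c ω (toLex ⟨r₁, k₁⟩) < prodTheta u c ω (toLex ⟨r₂, k₂⟩) ↔ k₂.castSucc <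
      A (Function.update (Function.update (topVertex m) r₁ k₁.castSucc) r₂ k₂.castSucc) r₂ := by
  set w := Function.update (Function.update (topVertex m) r₁ k₁.castSucc) r₂ k₂.castSucc
  have hw₂ : w r₂ = k₂.castSucc := Function.update_self _ _ _
  have hw₁ : w r₁ = k₁.castSucc := by simp only [w, Function.update_of_ne h, Function.update_self]
  refine ⟨fun hlt => (hA.apply_of_max_letter hω.1 hw₂ ?_).2.1, fun hmove => ?_⟩
  · exact forall_of_update_eq_castSucc
      (forall_of_update_eq_castSucc (forall_of_topVertex_eq_castSucc _) hlt.le) le_rfl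
  by_contra hge
  have hlt := (not_lt.1 hge).lt_of_ne (hω.prodTheta_ne h.symm k₂ k₁)
  have hfix := (hA.apply_of_max_letter hω.1 hw₁ (forall_of_update_eq_castSucc
      (forall_of_update_eq_castSucc (forall_of_topVertex_eq_castSucc _) le_rfl) hlt.le)).1 r₂ h.symm
  rw [hfix, hw₂] at hmove
  exact lt_irrefl _ hmove

theorem nextSmaller_prodTheta_eq (hc : ∀ s, StrictMono fun i => ⟪c s, u s i⟫) {s : Fin t}
    {i : Fin (m s)} {j : Fin (m s + 1)} (h : IsSteepestEdge (u s) (c s) (ω s) i.castSucc j) :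
    nextSmaller (prodTheta u c ω) s i = j := by
  refine le_antisymm (nextSmaller_le_of_mem (mem_smallerAfter.2 ⟨h.1, fun k hk => ?_⟩))
    (le_nextSmaller fun k hik hkj => ?_)
  · subst hk
    exact h.tau_lt (hc s) (Fin.castSucc_lt_last k)
  · exact (h.tau_lt_tau (hc s) (Fin.castSucc_lt_castSucc_iff.2 hik) hkj).not_gt

theorem exists_max_letter {β : Type*} [LinearOrder β] (f : Letter t m → β)
    {v : ∀ r, Fin (m r + 1)} (hv : v ≠ topVertex m) :
    ∃ s, ∃ i : Fin (m s), v s = i.castSucc ∧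
      ∀ r k, v r = k.castSucc → f (toLex ⟨r, k⟩) ≤ f (toLex ⟨s, i⟩) := by
  obtain ⟨s, hs⟩ := Function.ne_iff.1 hv
  let letters : Finset (Letter t m) := {q | v (ofLex q).1 = (ofLex q).2.castSucc}
  obtain ⟨q, hq, hmax⟩ := letters.exists_max_image f
    ⟨toLex ⟨s, (v s).castPred hs⟩, by simpa [letters] using (Fin.castSucc_castPred (v s) hs).symm⟩
  obtain ⟨⟨s, i⟩, rfl⟩ : ∃ p, q = toLex p := ⟨_, rfl⟩
  exact ⟨s, i, by simpa [letters] using hq, fun r k hk => hmax _ (by simpa [letters] using hk)⟩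

theorem ProdIsArbo.eq_iff_sylvesterEquivalent (hc : ∀ s, StrictMono fun i => ⟪c s, u s i⟫)
    {ω' : ∀ s : Fin t, EuclideanSpace ℝ (Fin (d s))}
    {A' : (∀ s : Fin t, Fin (m s + 1)) → ∀ s : Fin t, Fin (m s + 1)}
    (hω : ProdStronglyGeneric u c ω) (hω' : ProdStronglyGeneric u c ω')
    (hA : ProdIsArbo u c ω A) (hA' : ProdIsArbo u c ω' A') :
    A = A' ↔ SylvesterEquivalent (prodTheta u c ω) (prodTheta u c ω') := by
  constructor
  · rintro rfl
    refine ⟨fun q q' hqq' => ?_, fun s i => ?_⟩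
    · obtain ⟨⟨r₁, k₁⟩, rfl⟩ : ∃ p, q = toLex p := ⟨_, rfl⟩
      obtain ⟨⟨r₂, k₂⟩, rfl⟩ : ∃ p, q' = toLex p := ⟨_, rfl⟩
      have h12 : r₁ ≠ r₂ := hqq'
      rw [hA.prodTheta_lt_iff hω h12, hA'.prodTheta_lt_iff hω' h12]
    · rw [nextSmaller_prodTheta_eq hc (hA.isSteepestEdge_update hω.1 s i),
        nextSmaller_prodTheta_eq hc (hA'.isSteepestEdge_update hω'.1 s i)]
  · intro h
    funext v
    by_cases hv : v = topVertex m
    · rw [hv, hA.1, hA'.1]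
    obtain ⟨s, i, hvs, hmax⟩ := exists_max_letter (prodTheta u c ω) hv
    have hmax' : ∀ r k, v r = k.castSucc →
        prodTheta u c ω' (toLex ⟨r, k⟩) ≤ prodTheta u c ω' (toLex ⟨s, i⟩) := by
      intro r k hk
      rcases eq_or_ne r s with rfl | hrs
      · rw [Fin.castSucc_injective _ (hk.symm.trans hvs)]
      · have hlt := (hmax r k hk).lt_of_ne (hω.prodTheta_ne hrs k i)
        exact ((h.lt_iff_lt (toLex ⟨r, k⟩) (toLex ⟨s, i⟩) hrs).1 hlt).le
    obtain ⟨hfix, hsteep⟩ := hA.apply_of_max_letter hω.1 hvs hmax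
    obtain ⟨hfix', hsteep'⟩ := hA'.apply_of_max_letter hω'.1 hvs hmax'
    funext r
    rcases eq_or_ne r s with rfl | hrs
    · rw [← nextSmaller_prodTheta_eq hc hsteep, ← nextSmaller_prodTheta_eq hc hsteep',
        h.nextSmaller_eq]
    · rw [hfix r hrs, hfix' r hrs]

end Product

theorem prod_arbo_eq_iff_sylv_general (t : ℕ) (m d : Fin t → ℕ)
    (u : ∀ s : Fin t, Fin (m s + 1) → EuclideanSpace ℝ (Fin (d s)))
    (c : ∀ s : Fin t, EuclideanSpace ℝ (Fin (d s)))
    (hc : ∀ s : Fin t, ∀ i j : Fin (m s + 1), i < j → ⟪c s, u s i⟫ < ⟪c s, u s j⟫)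
    (ω ω' : ∀ s : Fin t, EuclideanSpace ℝ (Fin (d s)))
    (hω : ProdStronglyGeneric u c ω) (hω' : ProdStronglyGeneric u c ω')
    (A A' : (∀ s : Fin t, Fin (m s + 1)) → ∀ s : Fin t, Fin (m s + 1))
    (hA : ProdIsArbo u c ω A) (hA' : ProdIsArbo u c ω' A')
    (π π' : Equiv.Perm (Lex ((s : Fin t) × Fin (m s))))
    (hπ : StrictMono fun q => prodTheta u c ω (π q))
    (hπ' : StrictMono fun q => prodTheta u c ω' (π' q)) :
    A = A' ↔ SylvT π π' := by
  have hsort := SylvesterEquivalent.of_strictMono_comp hπ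
  have hsort' := SylvesterEquivalent.of_strictMono_comp hπ'
  rw [hA.eq_iff_sylvesterEquivalent hc hω hω' hA', sylvT_iff_sylvesterEquivalent]
  exact ⟨fun h => hsort.symm.trans (h.trans hsort'), fun h => hsort.trans (h.trans hsort'.symm)⟩

/-- for two weights strongly generic for the product, the product
arborescences agree if and only if the sorting permutations of the product
slope vectors are `(m_1, …, m_t)`-sylvester congruent. -/
theorem prod_arbo_eq_iff_sylv (t : ℕ) (ht : 1 ≤ t) (m d : Fin t → ℕ)
    (hm : ∀ s : Fin t, 1 ≤ m s) (hd : ∀ s : Fin t, 1 ≤ d s)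
    (u : ∀ s : Fin t, Fin (m s + 1) → EuclideanSpace ℝ (Fin (d s)))
    (c : ∀ s : Fin t, EuclideanSpace ℝ (Fin (d s)))
    (hc : ∀ s : Fin t, ∀ i j : Fin (m s + 1), i < j → ⟪c s, u s i⟫ < ⟪c s, u s j⟫)
    (ω ω' : ∀ s : Fin t, EuclideanSpace ℝ (Fin (d s)))
    (hω : ProdStronglyGeneric u c ω) (hω' : ProdStronglyGeneric u c ω')
    (A A' : (∀ s : Fin t, Fin (m s + 1)) → ∀ s : Fin t, Fin (m s + 1))
    (hA : ProdIsArbo u c ω A) (hA' : ProdIsArbo u c ω' A')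
    (π π' : Equiv.Perm (Lex ((s : Fin t) × Fin (m s))))
    (hπ : StrictMono fun q => prodTheta u c ω (π q))
    (hπ' : StrictMono fun q => prodTheta u c ω' (π' q)) :
    A = A' ↔ SylvT π π' :=
  prod_arbo_eq_iff_sylv_general t m d u c hc ω ω' hω hω' A A' hA hA' π π' hπ hπ'
end

section
/- In the product setting with each factor a full-dimensional simplex (d_s = m_s and u^s : [m_s+1] → ℝ^{m_s} affinely independent for every s ∈ [t]), the product slope map Θ : ℝ^m → ℝ^m (where d = m = m_1 + ⋯ + m_t) is a continuous bijection from ℝ^m onto ℝ^m. -/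
open scoped RealInnerProductSpace

/-! Each coordinate of `Θ` only sees one factor, so `Θ` is the product of the factor slope
maps, up to reindexing coordinates. On a full-dimensional simplex, `ω ↦ (⟪ω, u k - u n⟫)ₖ`
identifies `ℝ^m` with the functions `x` on the vertices vanishing at the top vertex `n`, and the
slopes become `τ(i) = max_{j > i} (x j - x i) / (y j - y i)` for the strictly increasing `y`
given by `c`. Since `τ(i) = τ` exactly when `x i = max_{j > i} (x j - τ (y j - y i))`, the
vector `x` is recovered from the slopes by solving downwards from the top vertex. Continuity is
clear, each slope being a finite maximum of linear functions. -/

open Finset Function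

section MaxSlope

variable {n : ℕ}

lemma Fin.Ioi_castSucc_nonempty (i : Fin n) : (Ioi i.castSucc).Nonempty :=
  ⟨Fin.last n, mem_Ioi.2 i.castSucc_lt_last⟩

noncomputable def maxSlope (y x : Fin (n + 1) → ℝ) (i : Fin n) : ℝ :=
  (Ioi i.castSucc).sup' i.Ioi_castSucc_nonempty
    fun j => (x j - x i.castSucc) / (y j - y i.castSucc)

/-- The least value of `x` at `i` for which no slope from `i` to a later point exceeds `τ`. -/
noncomputable def slopeThreshold (y x : Fin (n + 1) → ℝ) (τ : ℝ) (i : Fin n) : ℝ :=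
  (Ioi i.castSucc).sup' i.Ioi_castSucc_nonempty fun j => x j - τ * (y j - y i.castSucc)

variable {y : Fin (n + 1) → ℝ}

lemma maxSlope_le_iff (hy : StrictMono y) {x : Fin (n + 1) → ℝ} {τ : ℝ} {i : Fin n} :
    maxSlope y x i ≤ τ ↔ slopeThreshold y x τ i ≤ x i.castSucc := by
  simp only [maxSlope, slopeThreshold, sup'_le_iff, mem_Ioi]
  refine forall₂_congr fun j hj => ?_
  rw [div_le_iff₀ (sub_pos.2 (hy hj))]
  constructor <;> intro h <;> linarith

lemma le_maxSlope_iff (hy : StrictMono y) {x : Fin (n + 1) → ℝ} {τ : ℝ} {i : Fin n} :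
    τ ≤ maxSlope y x i ↔ x i.castSucc ≤ slopeThreshold y x τ i := by
  simp only [maxSlope, slopeThreshold, le_sup'_iff, mem_Ioi]
  refine exists_congr fun j => and_congr_right fun hj => ?_
  rw [le_div_iff₀ (sub_pos.2 (hy hj))]
  constructor <;> intro h <;> linarith

lemma maxSlope_eq_iff (hy : StrictMono y) {x : Fin (n + 1) → ℝ} {τ : ℝ} {i : Fin n} :
    maxSlope y x i = τ ↔ x i.castSucc = slopeThreshold y x τ i := by
  rw [le_antisymm_iff, maxSlope_le_iff hy, le_maxSlope_iff hy, le_antisymm_iff, and_comm]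

lemma maxSlope_congr {x x' : Fin (n + 1) → ℝ} {i : Fin n}
    (h : ∀ j, i.castSucc ≤ j → x j = x' j) : maxSlope y x i = maxSlope y x' i :=
  sup'_congr _ rfl fun j hj => by rw [h j (mem_Ioi.1 hj).le, h _ le_rfl]

lemma slopeThreshold_congr {x x' : Fin (n + 1) → ℝ} {τ : ℝ} {i : Fin n}
    (h : ∀ j, i.castSucc < j → x j = x' j) :
    slopeThreshold y x τ i = slopeThreshold y x' τ i :=
  sup'_congr _ rfl fun j hj => by rw [h j (mem_Ioi.1 hj)]

lemma maxSlope_injective (hy : StrictMono y) {x x' : Fin (n + 1) → ℝ}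
    (hlast : x (Fin.last n) = x' (Fin.last n)) (h : maxSlope y x = maxSlope y x') : x = x' := by
  suffices ∀ k j, k ≤ j → x j = x' j from funext fun j => this j j le_rfl
  intro k
  induction k using Fin.reverseInduction with
  | last => intro j hj; rw [Fin.last_le_iff.1 hj, hlast]
  | cast k ih =>
    intro j hj
    rcases hj.eq_or_lt with rfl | hj
    · rw [(maxSlope_eq_iff hy (x := x)).1 rfl, (maxSlope_eq_iff hy).1 (congrFun h k).symm]
      exact slopeThreshold_congr fun j hj => ih j (Fin.castSucc_lt_iff_succ_le.1 hj)
    · exact ih j (Fin.castSucc_lt_iff_succ_le.1 hj)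

lemma exists_maxSlope_eq (hy : StrictMono y) (τ : Fin n → ℝ) :
    ∃ x : Fin (n + 1) → ℝ, x (Fin.last n) = 0 ∧ maxSlope y x = τ := by
  suffices ∀ k, ∃ x : Fin (n + 1) → ℝ, x (Fin.last n) = 0 ∧
      ∀ i : Fin n, k ≤ i.castSucc → maxSlope y x i = τ i by
    obtain ⟨x, hlast, hx⟩ := this 0
    exact ⟨x, hlast, funext fun i => hx i (Fin.zero_le _)⟩
  intro k
  induction k using Fin.reverseInduction with
  | last => exact ⟨0, rfl, fun i hi => absurd hi (not_le.2 i.castSucc_lt_last)⟩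
  | cast k ih =>
    obtain ⟨x, hlast, hx⟩ := ih
    refine ⟨update x k.castSucc (slopeThreshold y x (τ k) k),
      by rwa [update_of_ne k.castSucc_lt_last.ne'], fun i hi => ?_⟩
    rcases hi.eq_or_lt with hik | hik
    · obtain rfl := Fin.castSucc_injective _ hik
      rw [maxSlope_eq_iff hy, update_self]
      exact slopeThreshold_congr fun j hj => (update_of_ne hj.ne' _ _).symm
    · rw [maxSlope_congr fun j hj => update_of_ne (hik.trans_le hj).ne' _ _]
      exact hx i (Fin.castSucc_lt_iff_succ_le.1 hik)

lemma continuous_maxSlope (y : Fin (n + 1) → ℝ) (i : Fin n) :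
    Continuous fun x : Fin (n + 1) → ℝ => maxSlope y x i :=
  Continuous.finset_sup'_apply _ fun j _ =>
    ((continuous_apply j).sub (continuous_apply i.castSucc)).div_const _

end MaxSlope

lemma Module.Basis.exists_inner_eq {ι E : Type*} [NormedAddCommGroup E] [InnerProductSpace ℝ E]
    [FiniteDimensional ℝ E] (B : Module.Basis ι ℝ E) (f : ι → ℝ) :
    ∃ ω : E, ∀ i, ⟪ω, B i⟫ = f i :=
  ⟨(InnerProductSpace.toDual ℝ E).symm (B.constr ℝ f).toContinuousLinearMap, fun i => by
    rw [InnerProductSpace.toDual_symm_apply, LinearMap.coe_toContinuousLinearMap',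
      B.constr_basis]⟩

section Simplex

variable {E : Type*} [NormedAddCommGroup E] [InnerProductSpace ℝ E] {n : ℕ}

def heightFromTop (u : Fin (n + 1) → E) (ω : E) : Fin (n + 1) → ℝ :=
  fun k => ⟪ω, u k - u (Fin.last n)⟫

lemma heightFromTop_last (u : Fin (n + 1) → E) (ω : E) :
    heightFromTop u ω (Fin.last n) = 0 := by
  simp [heightFromTop]

lemma heightFromTop_sub (u : Fin (n + 1) → E) (ω : E) (i j : Fin (n + 1)) :
    heightFromTop u ω j - heightFromTop u ω i = ⟪ω, u j - u i⟫ := by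
  rw [heightFromTop, heightFromTop, ← inner_sub_right, sub_sub_sub_cancel_right]

lemma strictMono_heightFromTop {u : Fin (n + 1) → E} {c : E}
    (hc : StrictMono fun k => ⟪c, u k⟫) : StrictMono (heightFromTop u c) := fun i j hij => by
  simpa only [heightFromTop, inner_sub_right, sub_lt_sub_iff_right] using hc hij

lemma continuous_heightFromTop (u : Fin (n + 1) → E) : Continuous (heightFromTop u) :=
  continuous_pi fun _ => continuous_id.inner continuous_const

lemma heightFromTop_injective (b : AffineBasis (Fin (n + 1)) ℝ E) :
    Injective (heightFromTop b) := fun ω ω' h =>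
  InnerProductSpace.ext_inner_right_basis (b.basisOf (Fin.last n)) fun j => by
    simpa only [heightFromTop, b.basisOf_apply, vsub_eq_sub] using congrFun h j

lemma exists_heightFromTop_eq [FiniteDimensional ℝ E] (b : AffineBasis (Fin (n + 1)) ℝ E)
    {x : Fin (n + 1) → ℝ} (hx : x (Fin.last n) = 0) : ∃ ω, heightFromTop b ω = x := by
  obtain ⟨ω, hω⟩ := (b.basisOf (Fin.last n)).exists_inner_eq fun j => x j
  refine ⟨ω, funext fun k => ?_⟩
  rcases eq_or_ne k (Fin.last n) with rfl | hk
  · rw [heightFromTop_last, hx]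
  · simpa only [heightFromTop, b.basisOf_apply, vsub_eq_sub] using hω ⟨k, hk⟩

theorem bijective_maxSlope_heightFromTop [FiniteDimensional ℝ E]
    (b : AffineBasis (Fin (n + 1)) ℝ E) {c : E} (hc : StrictMono (heightFromTop b c)) :
    Bijective fun ω => maxSlope (heightFromTop b c) (heightFromTop b ω) := by
  refine ⟨fun ω ω' h => heightFromTop_injective b ?_, fun τ => ?_⟩
  · exact maxSlope_injective hc (by rw [heightFromTop_last, heightFromTop_last]) h
  · obtain ⟨x, hlast, rfl⟩ := exists_maxSlope_eq hc τ
    obtain ⟨ω, rfl⟩ := exists_heightFromTop_eq b hlast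
    exact ⟨ω, rfl⟩

end Simplex

lemma tau_castSucc_eq_maxSlope {n d : ℕ} (u : Fin (n + 1) → EuclideanSpace ℝ (Fin d))
    (c ω : EuclideanSpace ℝ (Fin d)) (i : Fin n) :
    tau u c ω i.castSucc = maxSlope (heightFromTop u c) (heightFromTop u ω) i := by
  rw [tau, maxSlope, sup'_eq_csSup_image]
  congr 1
  ext r
  simp only [rho, heightFromTop_sub, Set.mem_ofPred_eq, Set.mem_image, coe_Ioi, Set.mem_Ioi,
    eq_comm]

theorem prod_slope_map_continuous_bijective_general (t : ℕ)
    (m : Fin t → ℕ)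
    (u : ∀ s : Fin t, Fin (m s + 1) → EuclideanSpace ℝ (Fin (m s)))
    (hu : ∀ s : Fin t, AffineIndependent ℝ (u s))
    (c : ∀ s : Fin t, EuclideanSpace ℝ (Fin (m s)))
    (hc : ∀ s : Fin t, ∀ i j : Fin (m s + 1), i < j → ⟪c s, u s i⟫ < ⟪c s, u s j⟫) :
    Continuous (prodTheta u c) ∧ Function.Bijective (prodTheta u c) := by
  let b s : AffineBasis (Fin (m s + 1)) ℝ (EuclideanSpace ℝ (Fin (m s))) :=
    ⟨u s, hu s, (hu s).affineSpan_eq_top_iff_card_eq_finrank_add_one.2 (by simp)⟩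
  have hΘ : prodTheta u c = (Equiv.piCurry fun _ _ => ℝ).symm ∘
      Pi.map fun s ω => maxSlope (heightFromTop (u s) (c s)) (heightFromTop (u s) ω) := by
    funext ω q
    exact tau_castSucc_eq_maxSlope _ _ _ _
  rw [hΘ]
  refine ⟨continuous_pi fun q => ?_, (Equiv.bijective _).comp (Bijective.piMap fun s => ?_)⟩
  · exact (continuous_maxSlope _ _).comp ((continuous_heightFromTop _).comp (continuous_apply _))
  · exact bijective_maxSlope_heightFromTop (b s) (strictMono_heightFromTop (hc s))

/-- for a product of full-dimensional simplices, the product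
slope map `Θ` is a continuous bijection from `ℝ^m` onto `ℝ^m`,
`m = m_1 + ⋯ + m_t` (the domain being identified with the product of the
`ℝ^{m_s}` and the codomain with real vectors indexed by `Σ s, [m_s]`). -/
theorem prod_slope_map_continuous_bijective (t : ℕ) (ht : 1 ≤ t)
    (m : Fin t → ℕ) (hm : ∀ s : Fin t, 1 ≤ m s)
    (u : ∀ s : Fin t, Fin (m s + 1) → EuclideanSpace ℝ (Fin (m s)))
    (hu : ∀ s : Fin t, AffineIndependent ℝ (u s))
    (c : ∀ s : Fin t, EuclideanSpace ℝ (Fin (m s)))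
    (hc : ∀ s : Fin t, ∀ i j : Fin (m s + 1), i < j → ⟪c s, u s i⟫ < ⟪c s, u s j⟫) :
    Continuous (prodTheta u c) ∧ Function.Bijective (prodTheta u c) :=
  prod_slope_map_continuous_bijective_general t m u hu c hc
end

section
/- In the product setting with t ≥ 1 segment factors (m_s = 1 and d_s = 1 for every s ∈ [t], so each factor is a full-dimensional segment in ℝ and the product polytope is combinatorially a t-dimensional cube), the number of distinct max-slope arborescences, i.e. the cardinality of the set {A | there exists ω ∈ ℝ^t generic for the product with A = A^ω}, equals t!. (This corresponds to the fact that the pivot polytope of the cube is the permutahedron.) -/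
open scoped RealInnerProductSpace

/-!
Let `x_s` be the slope of the `s`-th segment. The slope from a vertex to the neighbour raising
coordinate `s` is `x_s`, so `ω` is generic exactly when the `x_s` are pairwise distinct, and then
`A^ω` raises, at each vertex, the coordinate still at `0` with the largest `x_s`. Hence `A^ω`
depends only on the order of the `x_s`; conversely, `A^ω` at the vertex whose only zero
coordinates are `a` and `b` tells whether `x_a < x_b`. Since every `x` is realised by
`ω_s = x_s c_s`, the arborescences correspond bijectively to the `t!` orderings of `[t]`.
-/

open Function

section Cube

variable {ι α β : Type*} [LinearOrder α] [LinearOrder β]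

/-- Vertices of the cube `{0,1}^ι` are maps `ι → Fin 2`, and `x s` is the slope of an edge in
direction `s`. -/
def IsSteepest (x : ι → α) (v : ι → Fin 2) (s : ι) : Prop :=
  v s = 0 ∧ ∀ r, v r = 0 → x r ≤ x s

open Classical in
/-- For injective `x` this is the max-slope arborescence. -/
noncomputable def steepestArbo (x : ι → α) (v : ι → Fin 2) : ι → Fin 2 :=
  fun r => if IsSteepest x v r then 1 else v r

lemma exists_isSteepest [Finite ι] (x : ι → α) {v : ι → Fin 2} (hv : ∃ s, v s = 0) :
    ∃ s, IsSteepest x v s := by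
  have : Nonempty {r // v r = 0} := nonempty_subtype.2 hv
  obtain ⟨⟨s, hs⟩, hmax⟩ := Finite.exists_max fun r : {r // v r = 0} => x r
  exact ⟨s, hs, fun r hr => hmax ⟨r, hr⟩⟩

lemma IsSteepest.unique {x : ι → α} (hx : Injective x) {v : ι → Fin 2} {s r : ι}
    (hs : IsSteepest x v s) (hr : IsSteepest x v r) : s = r :=
  hx (le_antisymm (hr.2 s hs.1) (hs.2 r hr.1))

lemma isSteepest_iff_of_isSteepest {x : ι → α} {v : ι → Fin 2} {s₀ r : ι}
    (hs₀ : IsSteepest x v s₀) : IsSteepest x v r ↔ v r = 0 ∧ x r = x s₀ :=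
  ⟨fun hr => ⟨hr.1, le_antisymm (hs₀.2 r hr.1) (hr.2 s₀ hs₀.1)⟩,
    fun ⟨h0, he⟩ => ⟨h0, fun q hq => he ▸ hs₀.2 q hq⟩⟩

lemma isSteepest_congr {x : ι → α} {y : ι → β} (h : ∀ a b, x a ≤ x b ↔ y a ≤ y b)
    (v : ι → Fin 2) (s : ι) : IsSteepest x v s ↔ IsSteepest y v s :=
  and_congr_right fun _ => forall_congr' fun r => imp_congr_right fun _ => h r s

section pairVertex

variable [DecidableEq ι]

def pairVertex (a b : ι) : ι → Fin 2 := fun r => if r = a ∨ r = b then 0 else 1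

lemma pairVertex_eq_zero_iff {a b r : ι} : pairVertex a b r = 0 ↔ r = a ∨ r = b := by
  by_cases h : r = a ∨ r = b <;> simp [pairVertex, h]

lemma isSteepest_pairVertex_iff {x : ι → α} {a b : ι} :
    IsSteepest x (pairVertex a b) b ↔ x a ≤ x b := by
  simp only [IsSteepest, pairVertex_eq_zero_iff, or_true, true_and]
  exact ⟨fun h => h a (.inl rfl), fun h r hr => hr.elim (· ▸ h) (· ▸ le_rfl)⟩

lemma existsUnique_isSteepest_iff_injective [Finite ι] {x : ι → α} :
    (∀ v : ι → Fin 2, (∃ s, v s = 0) → ∃! s, IsSteepest x v s) ↔ Injective x := by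
  refine ⟨fun h a b hab => ?_, fun hx v hv => ?_⟩
  · have hb : IsSteepest x (pairVertex a b) b := isSteepest_pairVertex_iff.2 hab.le
    have ha : IsSteepest x (pairVertex a b) a :=
      (isSteepest_iff_of_isSteepest hb).2 ⟨pairVertex_eq_zero_iff.2 (.inl rfl), hab⟩
    exact (h _ ⟨a, ha.1⟩).unique ha hb
  · obtain ⟨s, hs⟩ := exists_isSteepest x hv
    exact ⟨s, hs, fun r hr => hr.unique hx hs⟩

end pairVertex

lemma steepestArbo_of_forall_ne_zero (x : ι → α) {v : ι → Fin 2} (hv : ∀ s, v s ≠ 0) :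
    steepestArbo x v = v :=
  funext fun r => if_neg fun hr => hv r hr.1

lemma steepestArbo_eq_update [DecidableEq ι] {x : ι → α} (hx : Injective x) {v : ι → Fin 2}
    {s : ι} (hs : IsSteepest x v s) : steepestArbo x v = update v s 1 := by
  funext r
  by_cases hr : r = s
  · subst hr; simp [steepestArbo, hs]
  · rw [update_of_ne hr]
    exact if_neg fun h => hr (h.unique hx hs)

lemma steepestArbo_apply_eq_one_iff {x : ι → α} {v : ι → Fin 2} {r : ι} (hr : v r = 0) :
    steepestArbo x v r = 1 ↔ IsSteepest x v r := by
  unfold steepestArbo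
  split_ifs with h <;> simp [h, hr]

lemma steepestArbo_eq_steepestArbo_iff {x : ι → α} {y : ι → β} :
    steepestArbo x = steepestArbo y ↔ ∀ a b, x a ≤ x b ↔ y a ≤ y b := by
  classical
  refine ⟨fun h a b => ?_, fun h => funext fun v => funext fun r => ?_⟩
  · have hb : pairVertex a b b = 0 := pairVertex_eq_zero_iff.2 (.inr rfl)
    rw [← isSteepest_pairVertex_iff, ← steepestArbo_apply_eq_one_iff hb, h,
      steepestArbo_apply_eq_one_iff hb, isSteepest_pairVertex_iff]
  · unfold steepestArbo
    simp only [isSteepest_congr h]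

end Cube

section Perm

lemma Equiv.Perm.eq_of_forall_le_iff_le {ι : Type*} [LinearOrder ι] [Finite ι]
    {σ τ : Equiv.Perm ι} (h : ∀ a b, σ a ≤ σ b ↔ τ a ≤ τ b) : σ = τ := by
  have hmono : Monotone (τ ∘ σ.symm) := fun i j hij =>
    (h (σ.symm i) (σ.symm j)).1 (by simpa using hij)
  have hid := (hmono.strictMono_of_injective (τ.injective.comp σ.symm.injective)).eq_id
  ext a
  simpa using (congrFun hid (σ a)).symm

lemma exists_perm_forall_le_iff_le {α : Type*} [LinearOrder α] {t : ℕ} {x : Fin t → α}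
    (hx : Injective x) : ∃ σ : Equiv.Perm (Fin t), ∀ a b, x a ≤ x b ↔ σ a ≤ σ b := by
  have hsorted : StrictMono (x ∘ Tuple.sort x) :=
    (Tuple.monotone_sort x).strictMono_of_injective (hx.comp (Tuple.sort x).injective)
  refine ⟨(Tuple.sort x)⁻¹, fun a b => ?_⟩
  simpa using hsorted.le_iff_le (a := (Tuple.sort x)⁻¹ a) (b := (Tuple.sort x)⁻¹ b)

lemma ncard_steepestArbo_injective (t : ℕ) :
    {A | ∃ x : Fin t → ℝ, Injective x ∧ steepestArbo x = A}.ncard = t.factorial := by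
  have hrange : {A | ∃ x : Fin t → ℝ, Injective x ∧ steepestArbo x = A} =
      Set.range fun σ : Equiv.Perm (Fin t) => steepestArbo σ := by
    ext A
    constructor
    · rintro ⟨x, hx, rfl⟩
      obtain ⟨σ, hσ⟩ := exists_perm_forall_le_iff_le hx
      exact ⟨σ, (steepestArbo_eq_steepestArbo_iff.2 hσ).symm⟩
    · rintro ⟨σ, rfl⟩
      refine ⟨fun s => ((σ s : ℕ) : ℝ),
        fun a b hab => σ.injective (Fin.ext (by simpa using hab)), ?_⟩
      exact steepestArbo_eq_steepestArbo_iff.2 fun a b => by simp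
  have hinj : Injective fun σ : Equiv.Perm (Fin t) => steepestArbo σ := fun σ τ h =>
    Equiv.Perm.eq_of_forall_le_iff_le (steepestArbo_eq_steepestArbo_iff.1 h)
  rw [hrange, Set.ncard_range_of_injective hinj, Nat.card_perm, Nat.card_fin]

end Perm

section Segments

variable {t : ℕ}

lemma fin_two_lt_iff : ∀ i j : Fin 2, i < j ↔ i = 0 ∧ j = 1 := by decide

lemma ne_topVertex_iff {v : Fin t → Fin 2} : v ≠ topVertex (fun _ => 1) ↔ ∃ s, v s = 0 := by
  refine Function.ne_iff.trans (exists_congr fun s => ?_)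
  change v s ≠ 1 ↔ v s = 0
  generalize v s = i
  revert i
  decide

/-- The slope `τ^{ω_s}(1)` of the `s`-th segment. -/
noncomputable def segmentSlope (u : ∀ _ : Fin t, Fin 2 → EuclideanSpace ℝ (Fin 1))
    (c ω : ∀ _ : Fin t, EuclideanSpace ℝ (Fin 1)) (s : Fin t) : ℝ :=
  rho (u s) (c s) (ω s) 0 1

variable {u : ∀ _ : Fin t, Fin 2 → EuclideanSpace ℝ (Fin 1)}
  {c ω : ∀ _ : Fin t, EuclideanSpace ℝ (Fin 1)}

lemma prodTau_eq_segmentSlope {v : Fin t → Fin 2} {s : Fin t}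
    (hs : IsSteepest (segmentSlope u c ω) v s) :
    prodTau (m := fun _ => 1) (d := fun _ => 1) u c ω v = segmentSlope u c ω s := by
  refine IsGreatest.csSup_eq ⟨⟨s, 1, ?_, ?_⟩, ?_⟩
  · change v s < 1
    rw [hs.1]
    decide
  · rw [hs.1]
    rfl
  · rintro y ⟨r, j, hj, rfl⟩
    obtain ⟨hr, rfl⟩ := (fin_two_lt_iff _ _).1 hj
    rw [hr]
    exact hs.2 r hr

lemma lt_and_rho_eq_prodTau_iff {v : Fin t → Fin 2} (hv : v ≠ topVertex (fun _ => 1))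
    (s : Fin t) (j : Fin 2) :
    (v s < j ∧ rho (u s) (c s) (ω s) (v s) j =
        prodTau (m := fun _ => 1) (d := fun _ => 1) u c ω v) ↔
      j = 1 ∧ IsSteepest (segmentSlope u c ω) v s := by
  obtain ⟨s₀, hs₀⟩ := exists_isSteepest (segmentSlope u c ω) (ne_topVertex_iff.1 hv)
  rw [fin_two_lt_iff, prodTau_eq_segmentSlope hs₀, isSteepest_iff_of_isSteepest hs₀]
  constructor
  · rintro ⟨⟨hs, rfl⟩, hslope⟩
    exact ⟨rfl, hs, by rw [← hslope, hs]; rfl⟩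
  · rintro ⟨rfl, hs, hslope⟩
    exact ⟨⟨hs, rfl⟩, by rw [← hslope, hs]; rfl⟩

lemma prodGeneric_iff_injective :
    ProdGeneric (m := fun _ => 1) (d := fun _ => 1) u c ω ↔ Injective (segmentSlope u c ω) := by
  rw [← existsUnique_isSteepest_iff_injective]
  refine forall_congr' fun v => ?_
  rw [← ne_topVertex_iff]
  refine imp_congr_right fun hv => ⟨fun ⟨p, hp, huniq⟩ => ?_, fun ⟨s, hs, huniq⟩ => ?_⟩
  · exact ⟨p.1, ((lt_and_rho_eq_prodTau_iff hv _ _).1 hp).2, fun r hr =>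
      congrArg Sigma.fst (huniq ⟨r, 1⟩ ((lt_and_rho_eq_prodTau_iff hv _ _).2 ⟨rfl, hr⟩))⟩
  · refine ⟨⟨s, 1⟩, (lt_and_rho_eq_prodTau_iff hv _ _).2 ⟨rfl, hs⟩, fun ⟨r, j⟩ hp => ?_⟩
    obtain ⟨rfl, hr⟩ := (lt_and_rho_eq_prodTau_iff hv r j).1 hp
    rw [huniq r hr]

lemma prodIsArbo_iff (hx : Injective (segmentSlope u c ω))
    {A : (Fin t → Fin 2) → Fin t → Fin 2} :
    ProdIsArbo (m := fun _ => 1) (d := fun _ => 1) u c ω A ↔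
      A = steepestArbo (segmentSlope u c ω) := by
  have htop : steepestArbo (segmentSlope u c ω) (topVertex fun _ => 1) = topVertex fun _ => 1 :=
    steepestArbo_of_forall_ne_zero _ fun s hs => ne_topVertex_iff.2 ⟨s, hs⟩ rfl
  constructor
  · rintro ⟨hAtop, hA⟩
    funext v
    by_cases hv : v = topVertex fun _ => 1
    · rw [hv, hAtop, htop]
    obtain ⟨s, hlt, hrest, hslope⟩ := hA v hv
    obtain ⟨hAs, hs⟩ := (lt_and_rho_eq_prodTau_iff hv s (A v s)).1 ⟨hlt, hslope⟩
    rw [steepestArbo_eq_update hx hs]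
    funext r
    by_cases hr : r = s
    · subst hr
      rw [hAs, update_self]
    · rw [update_of_ne hr, hrest r hr]
  · rintro rfl
    refine ⟨htop, fun v hv => ?_⟩
    obtain ⟨s, hs⟩ := exists_isSteepest (segmentSlope u c ω) (ne_topVertex_iff.1 hv)
    obtain ⟨hlt, hslope⟩ := (lt_and_rho_eq_prodTau_iff hv s 1).2 ⟨rfl, hs⟩
    rw [steepestArbo_eq_update hx hs]
    exact ⟨s, by rwa [update_self], fun r hr => update_of_ne hr _ _, by rwa [update_self]⟩

lemma segmentSlope_smul (hc : ∀ s, ⟪c s, u s 1 - u s 0⟫ ≠ 0) (x : Fin t → ℝ) :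
    segmentSlope u c (fun s => x s • c s) = x := by
  funext s
  rw [segmentSlope, rho, real_inner_smul_left, mul_div_assoc, div_self (hc s), mul_one]

end Segments

theorem card_arborescences_cube_eq_factorial_general (t : ℕ)
    (u : ∀ _ : Fin t, Fin 2 → EuclideanSpace ℝ (Fin 1))
    (c : ∀ _ : Fin t, EuclideanSpace ℝ (Fin 1))
    (hc : ∀ s : Fin t, ∀ i j : Fin 2, i < j → ⟪c s, u s i⟫ < ⟪c s, u s j⟫) :
    {A : (Fin t → Fin 2) → Fin t → Fin 2 |
        ∃ ω : ∀ _ : Fin t, EuclideanSpace ℝ (Fin 1),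
          ProdGeneric (m := fun _ => 1) (d := fun _ => 1) u c ω ∧
          ProdIsArbo (m := fun _ => 1) (d := fun _ => 1) u c ω A}.ncard =
      Nat.factorial t := by
  have hc' : ∀ s, ⟪c s, u s 1 - u s 0⟫ ≠ 0 := fun s => by
    rw [inner_sub_right]
    exact (sub_pos.2 (hc s 0 1 (by decide))).ne'
  rw [← ncard_steepestArbo_injective]
  congr 1
  ext A
  constructor
  · rintro ⟨ω, hgen, hA⟩
    have hx := prodGeneric_iff_injective.1 hgen
    exact ⟨_, hx, ((prodIsArbo_iff hx).1 hA).symm⟩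
  · rintro ⟨x, hx, rfl⟩
    have hslope := segmentSlope_smul hc' x
    have hx' : Injective (segmentSlope u c fun s => x s • c s) := by rwa [hslope]
    refine ⟨fun s => x s • c s, prodGeneric_iff_injective.2 hx', ?_⟩
    rw [prodIsArbo_iff hx', hslope]

/-- for a product of `t` segments (a combinatorial `t`-cube), the
number of max-slope arborescences is `t!` (the pivot polytope of the cube is
the permutahedron). -/
theorem card_arborescences_cube_eq_factorial (t : ℕ) (ht : 1 ≤ t)
    (u : ∀ _ : Fin t, Fin 2 → EuclideanSpace ℝ (Fin 1))
    (c : ∀ _ : Fin t, EuclideanSpace ℝ (Fin 1))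
    (hc : ∀ s : Fin t, ∀ i j : Fin 2, i < j → ⟪c s, u s i⟫ < ⟪c s, u s j⟫) :
    {A : (Fin t → Fin 2) → Fin t → Fin 2 |
        ∃ ω : ∀ _ : Fin t, EuclideanSpace ℝ (Fin 1),
          ProdGeneric (m := fun _ => 1) (d := fun _ => 1) u c ω ∧
          ProdIsArbo (m := fun _ => 1) (d := fun _ => 1) u c ω A}.ncard =
      Nat.factorial t :=
  card_arborescences_cube_eq_factorial_general t u c hc
end
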